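/- Define f : (0, π) → ℝ by f(θ) = 2π/(θ − tan(θ)) for θ ≠ π/2 and f(π/2) = 0. Then f is continuously differentiable on (0, π) and strictly increasing on (0, π). -/

import Mathlib

/-!
Clearing the denominator `cos θ`, `f` agrees on `(0, π)` (also at `π / 2`) with
`2π cos θ / (θ cos θ - sin θ)`, whose denominator is negative there and whose derivative is
`2π sin² θ / (θ cos θ - sin θ)² > 0`.
-/

open Real Set

namespace Real

theorem hasDerivAt_mul_cos_sub_sin (x : ℝ) :
    HasDerivAt (fun θ => θ * cos θ - sin θ) (-(x * sin x)) x :=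
  (((hasDerivAt_id' x).mul (hasDerivAt_cos x)).sub (hasDerivAt_sin x)).congr_deriv (by ring)

/-- Left of `π / 2` this is `θ < tan θ`; right of it both terms have a sign. -/
theorem mul_cos_sub_sin_neg {θ : ℝ} (h₀ : 0 < θ) (hπ : θ < π) : θ * cos θ - sin θ < 0 := by
  have hsin := sin_pos_of_pos_of_lt_pi h₀ hπ
  rcases le_or_gt (cos θ) 0 with hcos | hcos
  · nlinarith
  · have hθ : θ < π / 2 := by
      by_contra! h
      exact (cos_nonpos_of_pi_div_two_le_of_le h (by linarith)).not_gt hcos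
    have := lt_tan h₀ hθ
    rw [tan_eq_sin_div_cos, lt_div_iff₀ hcos] at this
    linarith

theorem cos_ne_zero_of_mem_Ioo_of_ne_pi_div_two {θ : ℝ} (hθ : θ ∈ Ioo 0 π) (h : θ ≠ π / 2) :
    cos θ ≠ 0 := fun hcos =>
  h <| injOn_cos (Ioo_subset_Icc_self hθ) ⟨by linarith [pi_pos], by linarith [pi_pos]⟩
    (hcos.trans cos_pi_div_two.symm)

theorem div_sub_tan_eq {θ : ℝ} (c : ℝ) (hcos : cos θ ≠ 0) (hden : θ * cos θ - sin θ ≠ 0) :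
    c / (θ - tan θ) = c * cos θ / (θ * cos θ - sin θ) := by
  rw [tan_eq_sin_div_cos]
  field_simp

theorem hasDerivAt_mul_cos_div_mul_cos_sub_sin (c : ℝ) {x : ℝ}
    (hx : x * cos x - sin x ≠ 0) :
    HasDerivAt (fun θ => c * cos θ / (θ * cos θ - sin θ))
      (c * sin x ^ 2 / (x * cos x - sin x) ^ 2) x :=
  (((hasDerivAt_cos x).const_mul c).div (hasDerivAt_mul_cos_sub_sin x) hx).congr_deriv (by ring)

theorem contDiffOn_mul_cos_div_mul_cos_sub_sin (c : ℝ) {n : WithTop ℕ∞} :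
    ContDiffOn ℝ n (fun θ => c * cos θ / (θ * cos θ - sin θ)) (Ioo 0 π) :=
  (contDiff_const.mul contDiff_cos).contDiffOn.div
    ((contDiff_id.mul contDiff_cos).sub contDiff_sin).contDiffOn
    fun _ hx => (mul_cos_sub_sin_neg hx.1 hx.2).ne

theorem strictMonoOn_mul_cos_div_mul_cos_sub_sin {c : ℝ} (hc : 0 < c) :
    StrictMonoOn (fun θ => c * cos θ / (θ * cos θ - sin θ)) (Ioo 0 π) := by
  refine strictMonoOn_of_deriv_pos (convex_Ioo 0 π)
    (contDiffOn_mul_cos_div_mul_cos_sub_sin c (n := 0)).continuousOn fun x hx => ?_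
  rw [interior_Ioo] at hx
  have hden := mul_cos_sub_sin_neg hx.1 hx.2
  rw [(hasDerivAt_mul_cos_div_mul_cos_sub_sin c hden.ne).deriv]
  have hsin := sin_pos_of_pos_of_lt_pi hx.1 hx.2
  exact div_pos (by positivity) (sq_pos_of_neg hden)

end Real

theorem angle_jump_function_C1_strictMono
    (f : ℝ → ℝ)
    (hf : ∀ θ ∈ Set.Ioo (0 : ℝ) Real.pi, θ ≠ Real.pi / 2 →
      f θ = 2 * Real.pi / (θ - Real.tan θ))
    (hf2 : f (Real.pi / 2) = 0) :
    ContDiffOn ℝ 1 f (Set.Ioo (0 : ℝ) Real.pi) ∧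
    StrictMonoOn f (Set.Ioo (0 : ℝ) Real.pi) := by
  have heq : EqOn f (fun θ => 2 * π * cos θ / (θ * cos θ - sin θ)) (Ioo 0 π) := by
    intro θ hθ
    rcases eq_or_ne θ (π / 2) with rfl | hθπ
    · simp [hf2]
    · rw [hf θ hθ hθπ, div_sub_tan_eq _ (cos_ne_zero_of_mem_Ioo_of_ne_pi_div_two hθ hθπ)
        (mul_cos_sub_sin_neg hθ.1 hθ.2).ne]
  exact ⟨(contDiffOn_mul_cos_div_mul_cos_sub_sin _).congr heq,
    (strictMonoOn_mul_cos_div_mul_cos_sub_sin (by positivity)).congr heq.symm⟩
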